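/- arXiv:1711.09228 — 3 statements merged into one kernel-verified Lean document; each statement's English description precedes it below -/
import Mathlib

section
/- Let a < b be real numbers and let f : ℝ → ℝ be continuous on [a,b], differentiable on (a,b), with both f and its derivative f' square-integrable on (a,b). Then for every x ∈ [a,b], |f(x)| ≤ (1/(b−a) + 2)^{1/2} · (∫_a^b f(t)² dt)^{1/4} · (∫_a^b f(t)² dt + ∫_a^b f'(t)² dt)^{1/4}. -/
open MeasureTheory Set

/-!
Choose y ∈ [a, b] at which f² is at most its mean, so that f(y)² ≤ ‖f‖²_{L²}/(b − a). The
fundamental theorem of calculus for f² gives f(x)² − f(y)² = ∫ 2 f f' over [y, x], which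
Cauchy–Schwarz bounds by 2‖f‖_{L²}‖f'‖_{L²}. Bounding both ‖f‖_{L²} and ‖f'‖_{L²} by ‖f‖_{H¹}
in one factor of each term yields f(x)² ≤ (1/(b − a) + 2)‖f‖_{L²}‖f‖_{H¹}.
-/

theorem exists_mem_Icc_mul_le_integral {a b : ℝ} {g : ℝ → ℝ} (hab : a ≤ b)
    (hg : ContinuousOn g (Icc a b)) : ∃ y ∈ Icc a b, (b - a) * g y ≤ ∫ t in a..b, g t := by
  obtain ⟨y, hy, hmin⟩ := isCompact_Icc.exists_isMinOn (nonempty_Icc.2 hab) hg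
  refine ⟨y, hy, ?_⟩
  have hint : IntervalIntegrable g volume a b := (uIcc_of_le hab ▸ hg).intervalIntegrable
  simpa [mul_comm] using
    intervalIntegral.integral_mono_on hab intervalIntegrable_const hint fun t ht => hmin ht

theorem integral_abs_mul_le_sqrt_mul_sqrt {α : Type*} [MeasurableSpace α] {μ : Measure α}
    {f g : α → ℝ} (hf : MemLp f 2 μ) (hg : MemLp g 2 μ) :
    ∫ t, |f t * g t| ∂μ ≤ √(∫ t, f t ^ 2 ∂μ) * √(∫ t, g t ^ 2 ∂μ) := by
  have h := integral_mul_norm_le_Lp_mul_Lq Real.HolderConjugate.two_two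
    (by simpa using hf) (by simpa using hg)
  simpa [Real.sqrt_eq_rpow, abs_mul] using h

theorem integral_two_mul_mul_deriv_eq_sq_sub_sq {u v : ℝ} {f f' : ℝ → ℝ} (huv : u ≤ v)
    (hcont : ContinuousOn f (Icc u v)) (hderiv : ∀ x ∈ Ioo u v, HasDerivAt f (f' x) x)
    (hint : IntervalIntegrable (fun t => f t * f' t) volume u v) :
    ∫ t in u..v, 2 * (f t * f' t) = f v ^ 2 - f u ^ 2 := by
  refine intervalIntegral.integral_eq_sub_of_hasDerivAt_of_le huv (hcont.pow 2)
    (fun t ht => ?_) (hint.const_mul 2)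
  simpa [mul_comm, mul_assoc, mul_left_comm] using (hderiv t ht).pow 2

theorem abs_sq_sub_sq_le_two_mul_integral {a b x y : ℝ} {f f' : ℝ → ℝ}
    (hcont : ContinuousOn f (Icc a b)) (hderiv : ∀ x ∈ Ioo a b, HasDerivAt f (f' x) x)
    (hint : IntervalIntegrable (fun t => f t * f' t) volume a b)
    (hx : x ∈ Icc a b) (hy : y ∈ Icc a b) :
    |f x ^ 2 - f y ^ 2| ≤ 2 * ∫ t in a..b, |f t * f' t| := by
  wlog hyx : y ≤ x generalizing x y
  · rw [abs_sub_comm]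
    exact this hy hx (le_of_not_ge hyx)
  have hsub : Icc y x ⊆ Icc a b := Icc_subset_Icc hy.1 hx.2
  have hint' : IntervalIntegrable (fun t => f t * f' t) volume y x :=
    hint.mono_set (by simpa [uIcc_of_le hyx, uIcc_of_le (hy.1.trans hyx |>.trans hx.2)])
  rw [← integral_two_mul_mul_deriv_eq_sq_sub_sq hyx (hcont.mono hsub)
    (fun t ht => hderiv t ⟨hy.1.trans_lt ht.1, ht.2.trans_le hx.2⟩) hint']
  calc |∫ t in y..x, 2 * (f t * f' t)|
      ≤ ∫ t in y..x, |2 * (f t * f' t)| := intervalIntegral.abs_integral_le_integral_abs hyx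
    _ ≤ ∫ t in a..b, |2 * (f t * f' t)| :=
        intervalIntegral.integral_mono_interval hy.1 hyx hx.2
          (Filter.Eventually.of_forall fun t => abs_nonneg _) (hint.const_mul 2).abs
    _ = 2 * ∫ t in a..b, |f t * f' t| := by
        simp only [abs_mul, abs_two, intervalIntegral.integral_const_mul]

theorem abs_le_of_sq_le_mul_add_two_mul_sqrt {z L I J : ℝ} (hL : 0 ≤ L) (hI : 0 ≤ I)
    (hJ : 0 ≤ J) (h : z ^ 2 ≤ L * I + 2 * (√I * √J)) :
    |z| ≤ (L + 2) ^ ((1 : ℝ) / 2) * I ^ ((1 : ℝ) / 4) * (I + J) ^ ((1 : ℝ) / 4) := by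
  have hIJ : √I * √I ≤ √I * √(I + J) := by gcongr; linarith
  have hJ' : √I * √J ≤ √I * √(I + J) := by gcongr; linarith
  have hz : z ^ 2 ≤ (L + 2) * (√I * √(I + J)) := by
    rw [Real.mul_self_sqrt hI] at hIJ
    nlinarith
  calc |z| = √(z ^ 2) := (Real.sqrt_sq_eq_abs z).symm
    _ ≤ √((L + 2) * (√I * √(I + J))) := Real.sqrt_le_sqrt hz
    _ = _ := by
      rw [Real.sqrt_mul (by positivity), Real.sqrt_mul (Real.sqrt_nonneg I)]
      simp only [Real.sqrt_eq_rpow, ← Real.rpow_mul hI, ← Real.rpow_mul (add_nonneg hI hJ)]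
      norm_num [mul_assoc]

theorem sobolev_inequality_interval_general
    (a b : ℝ) (hab : a < b) (f f' : ℝ → ℝ)
    (hcont : ContinuousOn f (Set.Icc a b))
    (hderiv : ∀ x ∈ Set.Ioo a b, HasDerivAt f (f' x) x)
    (hf'2 : MeasureTheory.IntegrableOn (fun t => f' t ^ 2) (Set.Ioo a b)) :
    ∀ x ∈ Set.Icc a b,
      |f x| ≤ (1 / (b - a) + 2) ^ ((1 : ℝ) / 2) *
        (∫ t in a..b, f t ^ 2) ^ ((1 : ℝ) / 4) *
        ((∫ t in a..b, f t ^ 2) + ∫ t in a..b, f' t ^ 2) ^ ((1 : ℝ) / 4) := by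
  intro x hx
  have hf : MemLp f 2 (volume.restrict (Ioo a b)) :=
    (memLp_two_iff_integrable_sq
      ((hcont.mono Ioo_subset_Icc_self).aestronglyMeasurable measurableSet_Ioo)).2
      ((hcont.pow 2).integrableOn_Icc.mono_set Ioo_subset_Icc_self)
  have hf' : MemLp f' 2 (volume.restrict (Ioo a b)) := by
    refine (memLp_two_iff_integrable_sq
      ((measurable_deriv f).aestronglyMeasurable.congr ?_)).2 hf'2
    filter_upwards [ae_restrict_mem measurableSet_Ioo] with t ht
    exact (hderiv t ht).deriv
  have hint : IntervalIntegrable (fun t => f t * f' t) volume a b :=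
    (intervalIntegrable_iff_integrableOn_Ioo_of_le hab.le).2 (hf.integrable_mul hf')
  have hCS : ∫ t in a..b, |f t * f' t| ≤
      √(∫ t in a..b, f t ^ 2) * √(∫ t in a..b, f' t ^ 2) := by
    simp only [intervalIntegral.integral_of_le hab.le, integral_Ioc_eq_integral_Ioo]
    exact integral_abs_mul_le_sqrt_mul_sqrt hf hf'
  obtain ⟨y, hy, hyavg⟩ :=
    exists_mem_Icc_mul_le_integral (g := fun t => f t ^ 2) hab.le (hcont.pow 2)
  have hfy : f y ^ 2 ≤ (∫ t in a..b, f t ^ 2) / (b - a) := by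
    rw [le_div_iff₀ (sub_pos.2 hab)]
    linarith
  have hdiff := abs_sq_sub_sq_le_two_mul_integral hcont hderiv hint hx hy
  refine abs_le_of_sq_le_mul_add_two_mul_sqrt (by positivity)
    (intervalIntegral.integral_nonneg hab.le fun t _ => sq_nonneg _)
    (intervalIntegral.integral_nonneg hab.le fun t _ => sq_nonneg _) ?_
  rw [one_div_mul_eq_div]
  linarith [le_abs_self (f x ^ 2 - f y ^ 2)]

/-- Sobolev inequality on a bounded interval `(a, b)`:
for `f ∈ H¹(a,b)`, `‖f‖_∞ ≤ (1/(b-a) + 2)^(1/2) ‖f‖_{L²}^(1/2) ‖f‖_{H¹}^(1/2)`. -/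
theorem sobolev_inequality_interval
    (a b : ℝ) (hab : a < b) (f f' : ℝ → ℝ)
    (hcont : ContinuousOn f (Set.Icc a b))
    (hderiv : ∀ x ∈ Set.Ioo a b, HasDerivAt f (f' x) x)
    (hf2 : MeasureTheory.IntegrableOn (fun t => f t ^ 2) (Set.Ioo a b))
    (hf'2 : MeasureTheory.IntegrableOn (fun t => f' t ^ 2) (Set.Ioo a b)) :
    ∀ x ∈ Set.Icc a b,
      |f x| ≤ (1 / (b - a) + 2) ^ ((1 : ℝ) / 2) *
        (∫ t in a..b, f t ^ 2) ^ ((1 : ℝ) / 4) *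
        ((∫ t in a..b, f t ^ 2) + ∫ t in a..b, f' t ^ 2) ^ ((1 : ℝ) / 4) :=
  sobolev_inequality_interval_general a b hab f f' hcont hderiv hf'2
end

section
/- Let f : ℝ → ℝ be continuous on [0, x] for some x > 0 and let μ > 0 and ν > 0 be real. Then (1/Γ(μ)) ∫_0^x (x−s)^{μ−1} · ((1/Γ(ν)) ∫_0^s (s−t)^{ν−1} f(t) dt) ds = (1/Γ(μ+ν)) ∫_0^x (x−t)^{μ+ν−1} f(t) dt, i.e. J^μ(J^ν f)(x) = J^{μ+ν} f(x). -/
open MeasureTheory Set Function ContinuousLinearMap ProbabilityTheory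
open scoped Convolution

/-!
Extend `f` by zero outside `(0, x]` and cut the kernel `t ^ (ν - 1) / Γ(ν)` off outside `(0, x]`.
On `[0, x]` the fractional integral `J^ν` is then convolution with this integrable kernel. The
Beta integral shows that the kernels of orders `μ` and `ν` convolve to the kernel of order `μ + ν`
on `(-∞, x]`, and associativity of convolution (Fubini, legitimate because the extended `f` is
bounded) turns `J^μ (J^ν f)` into `J^(μ+ν) f`.
-/

section Causal

variable {𝕜 E E' F : Type*} [NontriviallyNormedField 𝕜]
  [NormedAddCommGroup E] [NormedSpace 𝕜 E] [NormedAddCommGroup E'] [NormedSpace 𝕜 E']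
  [NormedAddCommGroup F] [NormedSpace 𝕜 F] (L : E →L[𝕜] E' →L[𝕜] F) {f : ℝ → E} {g : ℝ → E'}

lemma support_convolution_integrand_subset_Ioc (hf : ∀ t ≤ 0, f t = 0) (hg : ∀ t ≤ 0, g t = 0)
    (s : ℝ) : support (fun t => L (f (s - t)) (g t)) ⊆ Ioc 0 s := by
  intro t ht
  by_contra hts
  rcases not_and_or.1 hts with h | h
  · exact ht (by simp [hg t (not_lt.1 h)])
  · exact ht (by simp [hf (s - t) (by linarith [not_le.1 h])])

variable [NormedSpace ℝ F]

lemma convolution_eq_intervalIntegral_of_nonpos_eq_zero (hf : ∀ t ≤ 0, f t = 0)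
    (hg : ∀ t ≤ 0, g t = 0) (s : ℝ) :
    (f ⋆[L] g) s = ∫ t in 0..s, L (f (s - t)) (g t) := by
  rw [convolution_eq_swap,
    intervalIntegral.integral_eq_integral_of_support_subset
      (support_convolution_integrand_subset_Ioc L hf hg s)]

lemma convolution_eq_zero_of_nonpos (hf : ∀ t ≤ 0, f t = 0) (hg : ∀ t ≤ 0, g t = 0) {s : ℝ}
    (hs : s ≤ 0) : (f ⋆[L] g) s = 0 := by
  have h := support_convolution_integrand_subset_Ioc L hf hg s
  rw [Ioc_eq_empty hs.not_gt, subset_empty_iff, support_eq_empty_iff] at h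
  simp [convolution_eq_swap, h]

end Causal

section Assoc

variable {𝕜 G : Type*} [RCLike 𝕜] [AddCommGroup G] [MeasurableSpace G] {μ : Measure G}
  {f g k : G → 𝕜}

lemma norm_convolution_mul_le (hg : Integrable g μ) {C : ℝ} (hk : ∀ t, ‖k t‖ ≤ C) (x : G) :
    ‖(g ⋆[mul 𝕜 𝕜, μ] k) x‖ ≤ (∫ t, ‖g t‖ ∂μ) * C := by
  rw [← integral_mul_const]
  refine norm_integral_le_of_norm_le (hg.norm.mul_const C) (.of_forall fun t => ?_)
  rw [mul_apply', norm_mul]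
  exact mul_le_mul_of_nonneg_left (hk _) (norm_nonneg _)

variable [MeasurableAdd₂ G] [MeasurableNeg G] [SFinite μ] [μ.IsAddLeftInvariant] [μ.IsNegInvariant]

lemma convolution_mul_assoc_of_bounded (hf : Integrable f μ) (hg : Integrable g μ)
    (hk : Integrable k μ) {C : ℝ} (hkC : ∀ t, ‖k t‖ ≤ C) (x : G) :
    ((f ⋆[mul 𝕜 𝕜, μ] g) ⋆[mul 𝕜 𝕜, μ] k) x = (f ⋆[mul 𝕜 𝕜, μ] (g ⋆[mul 𝕜 𝕜, μ] k)) x := by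
  set H := (fun t => ‖g t‖) ⋆[mul ℝ ℝ, μ] fun t => ‖k t‖
  have hH : ∀ t, ‖H t‖ ≤ (∫ t, ‖‖g t‖‖ ∂μ) * C :=
    norm_convolution_mul_le hg.norm (fun t => by simpa using hkC t)
  have hHint : Integrable H μ := hg.norm.integrable_convolution _ hk.norm
  refine convolution_assoc _ _ _ _ (fun a b c => mul_assoc a b c) hf.aestronglyMeasurable
    hg.aestronglyMeasurable hk.aestronglyMeasurable (hf.ae_convolution_exists _ hg)
    (hg.norm.ae_convolution_exists _ hk.norm) ?_
  simpa [ConvolutionExistsAt, mul_comm] using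
    hf.norm.bdd_mul ((hHint.comp_sub_left x).aestronglyMeasurable) (.of_forall fun t => hH (x - t))

end Assoc

lemma integral_sub_rpow_mul_rpow {a μ ν : ℝ} (ha : 0 < a) (hμ : 0 < μ) (hν : 0 < ν) :
    ∫ t in 0..a, (a - t) ^ (μ - 1) * t ^ (ν - 1) = beta μ ν * a ^ (μ + ν - 1) := by
  have h := Complex.betaIntegral_scaled ν μ ha
  rw [Complex.betaIntegral_eq_Gamma_mul_div _ _ (by simpa) (by simpa)] at h
  apply Complex.ofReal_injective
  rw [← intervalIntegral.integral_ofReal, beta, add_comm μ ν, mul_comm (Real.Gamma μ)]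
  push_cast
  rw [Complex.ofReal_cpow ha.le, ← Complex.Gamma_ofReal, ← Complex.Gamma_ofReal,
    ← Complex.Gamma_ofReal]
  push_cast
  rw [mul_comm, ← h]
  refine intervalIntegral.integral_congr fun t ht => ?_
  rw [uIcc_of_le ha.le] at ht
  rw [Complex.ofReal_cpow ht.1, Complex.ofReal_cpow (sub_nonneg.2 ht.2)]
  push_cast
  ring

/-- The Riemann–Liouville integral `J^ν f (x)`. -/
noncomputable def rlIntegral (ν : ℝ) (f : ℝ → ℝ) (x : ℝ) : ℝ :=
  1 / Real.Gamma ν * ∫ t in 0..x, (x - t) ^ (ν - 1) * f t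

lemma rlIntegral_congr {ν x : ℝ} {f g : ℝ → ℝ} (h : EqOn f g (uIoo 0 x)) :
    rlIntegral ν f x = rlIntegral ν g x := by
  rw [rlIntegral, rlIntegral, intervalIntegral.integral_congr_uIoo fun t ht => by rw [h ht]]

lemma rlIntegral_rpow_div_Gamma {μ ν x : ℝ} (hμ : 0 < μ) (hν : 0 < ν) (hx : 0 < x) :
    rlIntegral μ (fun t => t ^ (ν - 1) / Real.Gamma ν) x =
      x ^ (μ + ν - 1) / Real.Gamma (μ + ν) := by
  simp_rw [rlIntegral, mul_div_assoc', intervalIntegral.integral_div,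
    integral_sub_rpow_mul_rpow hx hμ hν, beta]
  have := Real.Gamma_pos_of_pos hμ
  have := Real.Gamma_pos_of_pos hν
  have := Real.Gamma_pos_of_pos (add_pos hμ hν)
  field_simp

noncomputable def rlKernel (a ν : ℝ) : ℝ → ℝ :=
  (Ioc 0 a).indicator fun t => t ^ (ν - 1) / Real.Gamma ν

section rlKernel

variable {a ν : ℝ}

lemma rlKernel_of_mem {t : ℝ} (ht : t ∈ Ioc 0 a) : rlKernel a ν t = t ^ (ν - 1) / Real.Gamma ν :=
  indicator_of_mem ht _

lemma rlKernel_of_nonpos {t : ℝ} (ht : t ≤ 0) : rlKernel a ν t = 0 :=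
  indicator_of_notMem (fun h => ht.not_gt h.1) _

lemma integrable_rlKernel (hν : 0 < ν) : Integrable (rlKernel a ν) := by
  rw [rlKernel, integrable_indicator_iff measurableSet_Ioc]
  exact ((intervalIntegral.intervalIntegrable_rpow' (by linarith)).div_const _).def'.mono_set
    Ioc_subset_uIoc

lemma convolution_eq_rlIntegral {K g : ℝ → ℝ} (hK : ∀ t ≤ a, K t = rlKernel a ν t)
    (hg : ∀ t ≤ 0, g t = 0) {s : ℝ} (hs : s ∈ Icc 0 a) :
    (K ⋆[mul ℝ ℝ] g) s = rlIntegral ν g s := by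
  have hK₀ : ∀ t ≤ 0, K t = 0 := fun t ht =>
    (hK t (ht.trans (hs.1.trans hs.2))).trans (rlKernel_of_nonpos ht)
  rw [convolution_eq_intervalIntegral_of_nonpos_eq_zero _ hK₀ hg, rlIntegral,
    ← intervalIntegral.integral_const_mul]
  refine intervalIntegral.integral_congr_uIoo fun t ht => ?_
  rw [uIoo_of_le hs.1] at ht
  rw [mul_apply', hK _ (by linarith [ht.1, hs.2]),
    rlKernel_of_mem ⟨by linarith [ht.2], by linarith [ht.1, hs.2]⟩]
  ring

lemma rlKernel_convolution_rlKernel {μ : ℝ} (hμ : 0 < μ) (hν : 0 < ν) {s : ℝ} (hs : s ≤ a) :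
    (rlKernel a μ ⋆[mul ℝ ℝ] rlKernel a ν) s = rlKernel a (μ + ν) s := by
  rcases le_or_gt s 0 with hs₀ | hs₀
  · rw [convolution_eq_zero_of_nonpos _ (fun t => rlKernel_of_nonpos)
      (fun t => rlKernel_of_nonpos) hs₀, rlKernel_of_nonpos hs₀]
  rw [convolution_eq_rlIntegral (fun t _ => rfl) (fun t => rlKernel_of_nonpos) ⟨hs₀.le, hs⟩,
    rlKernel_of_mem ⟨hs₀, hs⟩, ← rlIntegral_rpow_div_Gamma hμ hν hs₀]
  refine rlIntegral_congr fun t ht => ?_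
  rw [uIoo_of_le hs₀.le] at ht
  exact rlKernel_of_mem ⟨ht.1, by linarith [ht.2]⟩

end rlKernel

lemma ContinuousOn.exists_norm_indicator_Ioc_le {E : Type*} [NormedAddCommGroup E] {f : ℝ → E}
    {a b : ℝ} (hf : ContinuousOn f (Icc a b)) : ∃ C, ∀ t, ‖(Ioc a b).indicator f t‖ ≤ C := by
  obtain ⟨C, hC⟩ := isCompact_Icc.exists_bound_of_continuousOn hf
  refine ⟨max C 0, fun t => ?_⟩
  by_cases ht : t ∈ Ioc a b
  · rw [indicator_of_mem ht]
    exact (hC t (Ioc_subset_Icc_self ht)).trans (le_max_left _ _)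
  · rw [indicator_of_notMem ht, norm_zero]
    exact le_max_right _ _

theorem rlIntegral_rlIntegral {f : ℝ → ℝ} {x μ ν : ℝ} (hx : 0 < x)
    (hf : ContinuousOn f (Icc 0 x)) (hμ : 0 < μ) (hν : 0 < ν) :
    rlIntegral μ (rlIntegral ν f) x = rlIntegral (μ + ν) f x := by
  set F := (Ioc 0 x).indicator f
  have hF₀ : ∀ t ≤ 0, F t = 0 := fun t ht => indicator_of_notMem (fun h => ht.not_gt h.1) _
  have hFf : ∀ ρ, ∀ s ∈ Icc 0 x, rlIntegral ρ F s = rlIntegral ρ f s := fun ρ s hs =>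
    rlIntegral_congr fun t ht => by
      rw [uIoo_of_le hs.1] at ht
      exact indicator_of_mem (show t ∈ Ioc 0 x from ⟨ht.1, by linarith [ht.2, hs.2]⟩) _
  have hFint : Integrable F :=
    (hf.integrableOn_Icc.mono_set Ioc_subset_Icc_self).integrable_indicator measurableSet_Ioc
  obtain ⟨C, hFC⟩ := hf.exists_norm_indicator_Ioc_le
  have hx' : x ∈ Icc 0 x := ⟨hx.le, le_rfl⟩
  calc rlIntegral μ (rlIntegral ν f) x
      = rlIntegral μ (rlKernel x ν ⋆[mul ℝ ℝ] F) x := by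
        refine rlIntegral_congr fun s hs => ?_
        rw [uIoo_of_le hx.le] at hs
        have hs' : s ∈ Icc 0 x := ⟨hs.1.le, hs.2.le⟩
        rw [convolution_eq_rlIntegral (fun _ _ => rfl) hF₀ hs', hFf ν s hs']
    _ = (rlKernel x μ ⋆[mul ℝ ℝ] (rlKernel x ν ⋆[mul ℝ ℝ] F)) x :=
        (convolution_eq_rlIntegral (fun _ _ => rfl)
          (fun t => convolution_eq_zero_of_nonpos _ (fun t => rlKernel_of_nonpos) hF₀) hx').symm
    _ = ((rlKernel x μ ⋆[mul ℝ ℝ] rlKernel x ν) ⋆[mul ℝ ℝ] F) x :=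
        (convolution_mul_assoc_of_bounded (integrable_rlKernel hμ) (integrable_rlKernel hν)
          hFint hFC x).symm
    _ = rlIntegral (μ + ν) f x := by
        rw [convolution_eq_rlIntegral (fun t => rlKernel_convolution_rlKernel hμ hν) hF₀ hx',
          hFf _ x hx']

/-- Semigroup property of Riemann–Liouville fractional integrals:
`J^μ (J^ν f) (x) = J^(μ+ν) f (x)`. -/
theorem fractional_integral_semigroup
    (f : ℝ → ℝ) (x : ℝ) (hx : 0 < x) (hf : ContinuousOn f (Set.Icc 0 x))
    (μ ν : ℝ) (hμ : 0 < μ) (hν : 0 < ν) :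
    (1 / Real.Gamma μ) * ∫ s in (0 : ℝ)..x, (x - s) ^ (μ - 1) *
        ((1 / Real.Gamma ν) * ∫ t in (0 : ℝ)..s, (s - t) ^ (ν - 1) * f t) =
      (1 / Real.Gamma (μ + ν)) * ∫ t in (0 : ℝ)..x, (x - t) ^ (μ + ν - 1) * f t :=
  rlIntegral_rlIntegral hx hf hμ hν
end

section
/- Let m ≥ 1 be a natural number, α real with m − 1 < α < m, and let f : ℝ → ℝ be m-times continuously differentiable on [0,1]. Then for every x ∈ (0,1], (1/Γ(α)) ∫_0^x (x−s)^{α−1} · ((1/Γ(m−α)) ∫_0^s (s−t)^{m−α−1} f^{(m)}(t) dt) ds = f(x) − ∑_{k=0}^{m−1} f^{(k)}(0) · x^k / k!. -/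
/-!
Write `J^ν` for the Riemann–Liouville integral. The left-hand side is `J^α (J^(m-α) f^(m)) x`.
These integrals form a semigroup, `J^a J^b = J^(a+b)`: exchanging the order of integration over
the triangle `0 < t ≤ s ≤ x` reduces this to the beta integral
`∫_t^x (x-s)^(a-1) (s-t)^(b-1) ds = B(a,b) (x-t)^(a+b-1)`. So the left-hand side is
`J^m f^(m) x = ∫_0^x (x-t)^(m-1)/(m-1)! f^(m)(t) dt`, the integral remainder of the Taylor
expansion of `f` at `0`.
-/

open MeasureTheory Set Real Function
open scoped Nat

theorem intervalIntegrable_sub_rpow {r : ℝ} (hr : -1 < r) (c a b : ℝ) :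
    IntervalIntegrable (fun t => (c - t) ^ r) volume a b := by
  simpa using
    (intervalIntegral.intervalIntegrable_rpow' hr (a := c - a) (b := c - b)).comp_sub_left c

theorem integral_sub_rpow {r : ℝ} (hr : -1 < r) (c : ℝ) :
    ∫ t in (0 : ℝ)..c, (c - t) ^ r = c ^ (r + 1) / (r + 1) := by
  rw [intervalIntegral.integral_comp_sub_left (fun u => u ^ r), sub_self, sub_zero,
    integral_rpow (Or.inl hr), zero_rpow (by linarith), sub_zero]

theorem integral_rpow_mul_one_sub_rpow {a b : ℝ} (ha : 0 < a) (hb : 0 < b) :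
    ∫ v in (0 : ℝ)..1, v ^ (a - 1) * (1 - v) ^ (b - 1) = Gamma a * Gamma b / Gamma (a + b) := by
  have hB : Complex.betaIntegral a b =
      ((∫ v in (0 : ℝ)..1, v ^ (a - 1) * (1 - v) ^ (b - 1) : ℝ) : ℂ) := by
    rw [Complex.betaIntegral, ← intervalIntegral.integral_ofReal]
    refine intervalIntegral.integral_congr fun v hv => ?_
    rw [uIcc_of_le zero_le_one] at hv
    push_cast
    rw [Complex.ofReal_cpow hv.1, Complex.ofReal_cpow (sub_nonneg.2 hv.2)]
    push_cast
    ring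
  have h := Complex.betaIntegral_eq_Gamma_mul_div a b (by simpa) (by simpa)
  rw [hB, ← Complex.ofReal_add] at h
  simp only [Complex.Gamma_ofReal] at h
  exact_mod_cast h

theorem integral_sub_rpow_mul_sub_rpow {a b t x : ℝ} (ha : 0 < a) (hb : 0 < b) (ht : t < x) :
    ∫ s in t..x, (x - s) ^ (a - 1) * (s - t) ^ (b - 1) =
      Gamma a * Gamma b / Gamma (a + b) * (x - t) ^ (a + b - 1) := by
  have hc : 0 < x - t := sub_pos.2 ht
  have hsub := intervalIntegral.smul_integral_comp_mul_add
    (fun s => (x - s) ^ (a - 1) * (s - t) ^ (b - 1)) (x - t) t (a := 0) (b := 1)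
  simp only [mul_zero, zero_add, mul_one, sub_add_cancel, smul_eq_mul] at hsub
  have hscale : ∀ v ∈ uIcc (0 : ℝ) 1,
      (x - ((x - t) * v + t)) ^ (a - 1) * ((x - t) * v + t - t) ^ (b - 1) =
        (x - t) ^ (a + b - 2) * (v ^ (b - 1) * (1 - v) ^ (a - 1)) := by
    intro v hv
    rw [uIcc_of_le zero_le_one] at hv
    rw [show x - ((x - t) * v + t) = (x - t) * (1 - v) by ring, add_sub_cancel_right,
      mul_rpow hc.le (sub_nonneg.2 hv.2), mul_rpow hc.le hv.1,
      show a + b - 2 = (a - 1) + (b - 1) by ring, rpow_add hc]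
    ring
  rw [← hsub, intervalIntegral.integral_congr hscale, intervalIntegral.integral_const_mul,
    integral_rpow_mul_one_sub_rpow hb ha, add_comm b a,
    show a + b - 1 = 1 + (a + b - 2) by ring, rpow_add hc, rpow_one]
  ring

def lowerTriangle (x : ℝ) : Set (ℝ × ℝ) := {q | 0 < q.2 ∧ q.2 ≤ q.1 ∧ q.1 ≤ x}

theorem mem_lowerTriangle {x : ℝ} {q : ℝ × ℝ} :
    q ∈ lowerTriangle x ↔ 0 < q.2 ∧ q.2 ≤ q.1 ∧ q.1 ≤ x :=
  Iff.rfl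

section lowerTriangle

variable {E : Type*} [NormedAddCommGroup E] {x s t : ℝ}

theorem measurableSet_lowerTriangle : MeasurableSet (lowerTriangle x) :=
  (measurableSet_lt measurable_const measurable_snd).inter
    ((measurableSet_le measurable_snd measurable_fst).inter
      (measurableSet_le measurable_fst measurable_const))

theorem lowerTriangle_subset_prod : lowerTriangle x ⊆ Ioc 0 x ×ˢ Ioc 0 x :=
  fun _ ⟨h0, hts, hs⟩ => ⟨⟨h0.trans_le hts, hs⟩, ⟨h0, hts.trans hs⟩⟩

theorem integrableOn_lowerTriangle_iff {f : ℝ × ℝ → E} :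
    IntegrableOn f (lowerTriangle x) ↔
      Integrable ((lowerTriangle x).indicator f)
        ((volume.restrict (Ioc 0 x)).prod (volume.restrict (Ioc 0 x))) := by
  rw [Measure.prod_restrict, ← Measure.volume_eq_prod,
    integrable_indicator_iff measurableSet_lowerTriangle, IntegrableOn, IntegrableOn,
    Measure.restrict_restrict measurableSet_lowerTriangle,
    inter_eq_left.2 lowerTriangle_subset_prod]

theorem lowerTriangle_indicator_apply_of_le {f : ℝ × ℝ → E} (hs : s ≤ x) :
    (lowerTriangle x).indicator f (s, t) = (Ioc 0 s).indicator (fun t => f (s, t)) t := by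
  by_cases ht : t ∈ Ioc 0 s
  · rw [indicator_of_mem ht, indicator_of_mem (mem_lowerTriangle.2 ⟨ht.1, ht.2, hs⟩)]
  · rw [indicator_of_notMem ht, indicator_of_notMem fun h => ht ⟨h.1, h.2.1⟩]

theorem lowerTriangle_indicator_apply_of_pos {f : ℝ × ℝ → E} (ht : 0 < t) :
    (lowerTriangle x).indicator f (s, t) = (Icc t x).indicator (fun s => f (s, t)) s := by
  by_cases hs : s ∈ Icc t x
  · rw [indicator_of_mem hs, indicator_of_mem (mem_lowerTriangle.2 ⟨ht, hs.1, hs.2⟩)]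
  · rw [indicator_of_notMem hs, indicator_of_notMem fun h => hs ⟨h.2.1, h.2.2⟩]

theorem integral_integral_swap_lowerTriangle [NormedSpace ℝ E] {F : ℝ → ℝ → E} (hx : 0 ≤ x)
    (hF : IntegrableOn (uncurry F) (lowerTriangle x)) :
    ∫ s in 0..x, ∫ t in 0..s, F s t = ∫ t in 0..x, ∫ s in t..x, F s t := by
  have hswap := integral_integral_swap
    (f := fun s t => (lowerTriangle x).indicator (uncurry F) (s, t))
    (integrableOn_lowerTriangle_iff.1 hF)
  rw [intervalIntegral.integral_of_le hx, intervalIntegral.integral_of_le hx]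
  convert hswap using 1
  · refine setIntegral_congr_fun measurableSet_Ioc fun s hs => ?_
    simp only [lowerTriangle_indicator_apply_of_le hs.2]
    rw [intervalIntegral.integral_of_le hs.1.le, setIntegral_indicator measurableSet_Ioc,
      inter_eq_right.2 (Ioc_subset_Ioc_right hs.2)]
    rfl
  · refine setIntegral_congr_fun measurableSet_Ioc fun t ht => ?_
    simp only [lowerTriangle_indicator_apply_of_pos ht.1]
    rw [intervalIntegral.integral_of_le ht.2, setIntegral_indicator measurableSet_Icc,
      inter_eq_right.2 (Icc_subset_Ioc ht.1 le_rfl), integral_Icc_eq_integral_Ioc]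
    rfl

end lowerTriangle

theorem integrableOn_lowerTriangle_sub_rpow_mul_sub_rpow {a b x : ℝ} (ha : 0 < a) (hb : 0 < b) :
    IntegrableOn (fun q : ℝ × ℝ => (x - q.1) ^ (a - 1) * (q.1 - q.2) ^ (b - 1))
      (lowerTriangle x) := by
  rw [integrableOn_lowerTriangle_iff, integrable_prod_iff
    ((Measurable.indicator (by fun_prop) measurableSet_lowerTriangle).aestronglyMeasurable)]
  constructor
  · filter_upwards [ae_restrict_mem measurableSet_Ioc] with s hs
    simp only [lowerTriangle_indicator_apply_of_le hs.2]
    rw [integrable_indicator_iff measurableSet_Ioc, IntegrableOn,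
      Measure.restrict_restrict measurableSet_Ioc, inter_eq_left.2 (Ioc_subset_Ioc_right hs.2)]
    exact (intervalIntegrable_iff_integrableOn_Ioc_of_le hs.1.le).1
      ((intervalIntegrable_sub_rpow (by linarith) s 0 s).const_mul _)
  · have hnorm : ∀ s ∈ Ioc 0 x, ∫ t, ‖(lowerTriangle x).indicator
        (fun q : ℝ × ℝ => (x - q.1) ^ (a - 1) * (q.1 - q.2) ^ (b - 1)) (s, t)‖
          ∂(volume.restrict (Ioc 0 x)) = (x - s) ^ (a - 1) * (s ^ b / b) := by
      intro s hs
      simp only [lowerTriangle_indicator_apply_of_le hs.2, norm_indicator_eq_indicator_norm]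
      rw [setIntegral_indicator measurableSet_Ioc, inter_eq_right.2 (Ioc_subset_Ioc_right hs.2),
        ← intervalIntegral.integral_of_le hs.1.le]
      have hnonneg : ∀ t ∈ uIcc 0 s,
          ‖(x - s) ^ (a - 1) * (s - t) ^ (b - 1)‖ = (x - s) ^ (a - 1) * (s - t) ^ (b - 1) := by
        intro t ht
        rw [uIcc_of_le hs.1.le] at ht
        exact norm_of_nonneg (mul_nonneg (rpow_nonneg (sub_nonneg.2 hs.2) _)
          (rpow_nonneg (sub_nonneg.2 ht.2) _))
      rw [intervalIntegral.integral_congr hnonneg, intervalIntegral.integral_const_mul,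
        integral_sub_rpow (by linarith), sub_add_cancel]
    refine Integrable.congr ?_ ((ae_restrict_iff' measurableSet_Ioc).2
      (Filter.Eventually.of_forall fun s hs => (hnorm s hs).symm))
    exact ((intervalIntegrable_sub_rpow (by linarith) x 0 x).mul_continuousOn
      ((continuous_rpow_const hb.le).div_const b).continuousOn).1

noncomputable def riemannLiouville (ν : ℝ) (g : ℝ → ℝ) (x : ℝ) : ℝ :=
  1 / Gamma ν * ∫ t in (0 : ℝ)..x, (x - t) ^ (ν - 1) * g t

theorem riemannLiouville_riemannLiouville {a b x : ℝ} {g : ℝ → ℝ} (ha : 0 < a) (hb : 0 < b)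
    (hx : 0 ≤ x) (hg : ContinuousOn g (Icc 0 x)) :
    riemannLiouville a (riemannLiouville b g) x = riemannLiouville (a + b) g x := by
  obtain ⟨M, hM⟩ := isCompact_Icc.exists_bound_of_continuousOn hg
  have hgT : ContinuousOn (fun q : ℝ × ℝ => g q.2) (lowerTriangle x) :=
    hg.comp continuous_snd.continuousOn fun _ ⟨h0, hts, hs⟩ => ⟨h0.le, hts.trans hs⟩
  have hF : IntegrableOn
      (uncurry fun s t => (x - s) ^ (a - 1) * (s - t) ^ (b - 1) * g t) (lowerTriangle x) :=
    (integrableOn_lowerTriangle_sub_rpow_mul_sub_rpow ha hb).mul_bdd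
      (hgT.aestronglyMeasurable measurableSet_lowerTriangle)
      ((ae_restrict_iff' measurableSet_lowerTriangle).2 (Filter.Eventually.of_forall
        fun _ ⟨h0, hts, hs⟩ => hM _ ⟨h0.le, hts.trans hs⟩))
  unfold riemannLiouville
  calc 1 / Gamma a * ∫ s in (0 : ℝ)..x,
        (x - s) ^ (a - 1) * (1 / Gamma b * ∫ t in (0 : ℝ)..s, (s - t) ^ (b - 1) * g t)
      = 1 / Gamma a * (1 / Gamma b) * ∫ s in (0 : ℝ)..x, ∫ t in (0 : ℝ)..s,
          (x - s) ^ (a - 1) * (s - t) ^ (b - 1) * g t := by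
        rw [mul_assoc, ← intervalIntegral.integral_const_mul (1 / Gamma b)]
        congr 1
        refine intervalIntegral.integral_congr fun s _ => ?_
        simp only [mul_assoc, intervalIntegral.integral_const_mul]
        ring
    _ = 1 / Gamma a * (1 / Gamma b) * ∫ t in (0 : ℝ)..x, ∫ s in t..x,
          (x - s) ^ (a - 1) * (s - t) ^ (b - 1) * g t := by
        rw [integral_integral_swap_lowerTriangle hx hF]
    _ = 1 / Gamma a * (1 / Gamma b) * ∫ t in (0 : ℝ)..x,
          Gamma a * Gamma b / Gamma (a + b) * ((x - t) ^ (a + b - 1) * g t) := by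
        congr 1
        refine intervalIntegral.integral_congr_uIoo fun t ht => ?_
        rw [uIoo_of_le hx] at ht
        rw [intervalIntegral.integral_mul_const, integral_sub_rpow_mul_sub_rpow ha hb ht.2]
        ring
    _ = 1 / Gamma (a + b) * ∫ t in (0 : ℝ)..x, (x - t) ^ (a + b - 1) * g t := by
        rw [intervalIntegral.integral_const_mul]
        field_simp [(Gamma_pos_of_pos ha).ne', (Gamma_pos_of_pos hb).ne',
          (Gamma_pos_of_pos (add_pos ha hb)).ne']

theorem riemannLiouville_nat_add_one (p : ℕ) (g : ℝ → ℝ) (x : ℝ) :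
    riemannLiouville (p + 1) g x = ∫ t in (0 : ℝ)..x, (x - t) ^ p / p ! * g t := by
  rw [riemannLiouville, Gamma_nat_eq_factorial, add_sub_cancel_right,
    ← intervalIntegral.integral_const_mul]
  refine intervalIntegral.integral_congr fun t _ => ?_
  rw [rpow_natCast]
  ring

theorem iteratedDerivWithin_subset {𝕜 F : Type*} [NontriviallyNormedField 𝕜]
    [NormedAddCommGroup F] [NormedSpace 𝕜 F] {f : 𝕜 → F} {n : ℕ} {s u : Set 𝕜} {y : 𝕜}
    (hsu : s ⊆ u) (hs : UniqueDiffOn 𝕜 s) (hu : UniqueDiffOn 𝕜 u) (hf : ContDiffOn 𝕜 n f u)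
    (hy : y ∈ s) :
    iteratedDerivWithin n f s y = iteratedDerivWithin n f u y := by
  simp only [iteratedDerivWithin, iteratedFDerivWithin_subset hsu hs hu hf hy]

theorem sub_sum_iteratedDerivWithin_eq_integral {f : ℝ → ℝ} {p : ℕ} {a b x : ℝ}
    (hf : ContDiffOn ℝ (p + 1 : ℕ) f (Icc a b)) (hx : x ∈ Ioc a b) :
    f x - ∑ k ∈ Finset.range (p + 1), iteratedDerivWithin k f (Icc a b) a * (x - a) ^ k / k ! =
      ∫ t in a..x, (x - t) ^ p / p ! * iteratedDerivWithin (p + 1) f (Icc a b) t := by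
  have hsub : Icc a x ⊆ Icc a b := Icc_subset_Icc_right hx.2
  have hderiv : ∀ k ≤ p + 1, ∀ y ∈ Icc a x,
      iteratedDerivWithin k f (Icc a x) y = iteratedDerivWithin k f (Icc a b) y := fun k hk y hy =>
    iteratedDerivWithin_subset hsub (uniqueDiffOn_Icc hx.1)
      (uniqueDiffOn_Icc (hx.1.trans_le hx.2)) (hf.of_le (by exact_mod_cast hk)) hy
  have htaylor := taylor_integral_remainder (F := ℝ) (f := f) (x₀ := a) (x := x) (n := p)
    (by rw [uIcc_of_le hx.1.le]; exact hf.mono hsub)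
  rw [uIcc_of_le hx.1.le, taylor_within_apply] at htaylor
  rw [← Finset.sum_congr rfl fun k hk => ?_, htaylor]
  · refine intervalIntegral.integral_congr fun t ht => ?_
    rw [uIcc_of_le hx.1.le] at ht
    rw [hderiv (p + 1) le_rfl t ht, smul_eq_mul]
  · rw [hderiv k (by simp at hk; omega) a (left_mem_Icc.2 hx.1.le), smul_eq_mul]
    ring

/-- The identity `J^α D^α f (x) = f(x) - ∑_{k=0}^{m-1} f^(k)(0) x^k / k!` for the Caputo
fractional derivative, where `m - 1 < α < m` and `f` is `m`-times continuously
differentiable on `[0,1]`. -/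
theorem frac_integral_caputo_deriv
    (m : ℕ) (hm : 1 ≤ m) (α : ℝ) (hα₁ : (m : ℝ) - 1 < α) (hα₂ : α < m)
    (f : ℝ → ℝ) (hf : ContDiffOn ℝ m f (Set.Icc 0 1)) :
    ∀ x ∈ Set.Ioc (0 : ℝ) 1,
      (1 / Real.Gamma α) * ∫ s in (0 : ℝ)..x, (x - s) ^ (α - 1) *
          ((1 / Real.Gamma ((m : ℝ) - α)) *
            ∫ t in (0 : ℝ)..s, (s - t) ^ ((m : ℝ) - α - 1) *
              iteratedDerivWithin m f (Set.Icc 0 1) t) =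
        f x - ∑ k ∈ Finset.range m,
          iteratedDerivWithin k f (Set.Icc 0 1) 0 * x ^ k / k.factorial := by
  intro x hx
  obtain ⟨p, rfl⟩ := Nat.exists_eq_add_of_le' hm
  have hα : 0 < α := by push_cast at hα₁; linarith [p.cast_nonneg (α := ℝ)]
  have hD : ContinuousOn (iteratedDerivWithin (p + 1) f (Icc 0 1)) (Icc 0 x) :=
    (hf.continuousOn_iteratedDerivWithin le_rfl (uniqueDiffOn_Icc one_pos)).mono
      (Icc_subset_Icc_right hx.2)
  have hTaylor := sub_sum_iteratedDerivWithin_eq_integral hf hx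
  simp only [sub_zero] at hTaylor
  calc _ = riemannLiouville α (riemannLiouville ((p + 1 : ℕ) - α)
        (iteratedDerivWithin (p + 1) f (Icc 0 1))) x := rfl
    _ = riemannLiouville (p + 1) (iteratedDerivWithin (p + 1) f (Icc 0 1)) x := by
        rw [riemannLiouville_riemannLiouville hα (sub_pos.2 hα₂) hx.1.le hD]
        push_cast
        ring_nf
    _ = _ := by rw [riemannLiouville_nat_add_one, hTaylor]
end
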